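/- arXiv:2412.02223 — 2 statements merged into one kernel-verified Lean document; each statement's English description precedes it below -/
import Mathlib

section
/- Let n ∈ ℕ, let E be an Archimedean vector lattice, let f_1,…,f_n ∈ E, and let h: ℝ^n → ℝ be a positively homogeneous function bounded on the unit sphere. Let Φ and Ξ be nonempty families of sublinear maps ℝ^n → ℝ such that h(x) = inf_{φ ∈ Φ} φ(x) = inf_{ξ ∈ Ξ} ξ(x) for all x ∈ ℝ^n. Suppose that for every φ ∈ Φ and every ξ ∈ Ξ the suprema s_φ := sup_{a ∈ ∂φ(0)} Σ_{i=1}^n a_i f_i and s_ξ := sup_{a ∈ ∂ξ(0)} Σ_{i=1}^n a_i f_i exist in E, and that inf_{φ ∈ Φ} s_φ exists in E. Then inf_{ξ ∈ Ξ} s_ξ exists in E, and inf_{φ ∈ Φ} s_φ = inf_{ξ ∈ Ξ} s_ξ. -/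
open scoped BigOperators

/-- A sublinear map on ℝⁿ. -/
def Sublinear {n : ℕ} (φ : EuclideanSpace ℝ (Fin n) → ℝ) : Prop :=
  (∀ x y, φ (x + y) ≤ φ x + φ y) ∧ ∀ c : ℝ, 0 ≤ c → ∀ x, φ (c • x) = c * φ x

/-- The subdifferential of a sublinear map φ at 0. -/
def subdiff {n : ℕ} (φ : EuclideanSpace ℝ (Fin n) → ℝ) :
    Set (EuclideanSpace ℝ (Fin n)) :=
  {a | ∀ x, ∑ i, a i * x i ≤ φ x}



set_option linter.unusedVariables false
set_option linter.unusedSectionVars false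
set_option maxHeartbeats 1000000

namespace Stmt16
section A
variable {n : ℕ}



lemma sublinear_zero {φ : EuclideanSpace ℝ (Fin n) → ℝ} (hφ : Sublinear φ) : φ 0 = 0 := by
  have := hφ.2 0 le_rfl 0
  simpa using this

lemma euclid_decomp (z : EuclideanSpace ℝ (Fin n)) :
    z = ∑ i, z i • EuclideanSpace.single i (1:ℝ) := by
  have := (EuclideanSpace.basisFun (Fin n) ℝ).sum_repr z
  simp only [EuclideanSpace.basisFun_repr, EuclideanSpace.basisFun_apply] at this
  exact this.symm

lemma abs_coord_le (z : EuclideanSpace ℝ (Fin n)) (i : Fin n) : |z i| ≤ ‖z‖ := by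
  have h := EuclideanSpace.norm_eq z
  have h1 : |z i| = Real.sqrt ((z i)^2) := by
    rw [Real.sqrt_sq_eq_abs]
  rw [h1, h]
  apply Real.sqrt_le_sqrt
  have : (z i)^2 ≤ ∑ j, (z j)^2 := by
    apply Finset.single_le_sum (f := fun j => (z j)^2) (fun j _ => sq_nonneg _) (Finset.mem_univ i)
  simpa [sq] using this

lemma sublinear_bound {φ : EuclideanSpace ℝ (Fin n) → ℝ} (hφ : Sublinear φ) :
    ∃ C : ℝ, 0 ≤ C ∧ ∀ x, φ x ≤ C * ‖x‖ := by
  classical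
  set C : ℝ := ∑ i : Fin n, (|φ (EuclideanSpace.single i 1)| + |φ (-EuclideanSpace.single i 1)|)
    with hC
  have hC0 : 0 ≤ C := Finset.sum_nonneg fun i _ => by positivity
  refine ⟨C, hC0, fun x => ?_⟩
  have hsum : φ x ≤ ∑ i, φ (x i • EuclideanSpace.single i (1:ℝ)) := by
    calc φ x = φ (∑ i, x i • EuclideanSpace.single i (1:ℝ)) := by rw [← euclid_decomp]
    _ ≤ ∑ i, φ (x i • EuclideanSpace.single i (1:ℝ)) :=
      Finset.le_sum_of_subadditive φ (sublinear_zero hφ).le hφ.1 _ _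
  have hterm : ∀ i : Fin n, φ (x i • EuclideanSpace.single i (1:ℝ)) ≤
      (|φ (EuclideanSpace.single i 1)| + |φ (-EuclideanSpace.single i 1)|) * ‖x‖ := by
    intro i
    rcases le_or_gt 0 (x i) with hxi | hxi
    · rw [hφ.2 _ hxi]
      calc x i * φ (EuclideanSpace.single i 1)
          ≤ |x i| * |φ (EuclideanSpace.single i 1)| := by
            calc x i * φ (EuclideanSpace.single i 1) ≤ |x i * φ (EuclideanSpace.single i 1)| :=
              le_abs_self _
            _ = |x i| * |φ (EuclideanSpace.single i 1)| := abs_mul _ _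
        _ ≤ ‖x‖ * (|φ (EuclideanSpace.single i 1)| + |φ (-EuclideanSpace.single i 1)|) := by
            apply mul_le_mul (abs_coord_le x i) (le_add_of_nonneg_right (abs_nonneg _))
              (abs_nonneg _) (norm_nonneg x)
        _ = _ := mul_comm _ _
    · have h1 : x i • EuclideanSpace.single i (1:ℝ) = (-(x i)) • (-(EuclideanSpace.single i (1:ℝ))) := by
        simp
      rw [h1, hφ.2 _ (by linarith)]
      calc (-(x i)) * φ (-EuclideanSpace.single i 1)
          ≤ |x i| * |φ (-EuclideanSpace.single i 1)| := by
            calc (-(x i)) * φ (-EuclideanSpace.single i 1) ≤ |(-(x i)) * φ (-EuclideanSpace.single i 1)| :=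
              le_abs_self _
            _ = |x i| * |φ (-EuclideanSpace.single i 1)| := by rw [abs_mul, abs_neg]
        _ ≤ ‖x‖ * (|φ (EuclideanSpace.single i 1)| + |φ (-EuclideanSpace.single i 1)|) := by
            apply mul_le_mul (abs_coord_le x i) (le_add_of_nonneg_left (abs_nonneg _))
              (abs_nonneg _) (norm_nonneg x)
        _ = _ := mul_comm _ _
  calc φ x ≤ ∑ i, φ (x i • EuclideanSpace.single i (1:ℝ)) := hsum
    _ ≤ ∑ i, (|φ (EuclideanSpace.single i 1)| + |φ (-EuclideanSpace.single i 1)|) * ‖x‖ :=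
        Finset.sum_le_sum fun i _ => hterm i
    _ = C * ‖x‖ := by rw [hC, Finset.sum_mul]

lemma sublinear_continuous {φ : EuclideanSpace ℝ (Fin n) → ℝ} (hφ : Sublinear φ) :
    Continuous φ := by
  obtain ⟨C, hC0, hC⟩ := sublinear_bound hφ
  have hlip : ∀ x y, φ x - φ y ≤ C * ‖x - y‖ := by
    intro x y
    have := hφ.1 (x - y) y
    simp only [sub_add_cancel] at this
    have h2 := hC (x - y)
    linarith
  have : LipschitzWith (Real.toNNReal C) φ := by
    apply LipschitzWith.of_dist_le_mul
    intro x y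
    rw [Real.dist_eq, dist_eq_norm]
    rw [abs_sub_le_iff]
    constructor
    · exact (hlip x y).trans (by rw [Real.coe_toNNReal C hC0])
    · exact (hlip y x).trans (by rw [Real.coe_toNNReal C hC0, ← norm_neg, neg_sub])
  exact this.continuous




lemma linearmap_eq_dot (g : EuclideanSpace ℝ (Fin n) →ₗ[ℝ] ℝ) (x : EuclideanSpace ℝ (Fin n)) :
    g x = ∑ i, x i * g (EuclideanSpace.single i 1) := by
  conv_lhs => rw [euclid_decomp x]
  rw [map_sum]
  simp [smul_eq_mul]

lemma exists_mem_subdiff_dot_eq_aux {φ : EuclideanSpace ℝ (Fin n) → ℝ} (hφ : Sublinear φ)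
    (x₀ : EuclideanSpace ℝ (Fin n)) (hx : x₀ ≠ 0) :
    ∃ a ∈ subdiff φ, ∑ i, a i * x₀ i = φ x₀ := by
  classical
  set f : EuclideanSpace ℝ (Fin n) →ₗ.[ℝ] ℝ := LinearPMap.mkSpanSingleton x₀ (φ x₀) hx with hfdef
  have hneg : 0 ≤ φ x₀ + φ (-x₀) := by
    have := hφ.1 x₀ (-x₀)
    simpa [sublinear_zero hφ] using this
  have hf : ∀ z : f.domain, f z ≤ φ z := by
    rintro ⟨zv, hz⟩
    have hz' : zv ∈ Submodule.span ℝ ({x₀} : Set (EuclideanSpace ℝ (Fin n))) := hz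
    obtain ⟨t, ht⟩ := Submodule.mem_span_singleton.1 hz'
    subst ht
    have happ : f ⟨t • x₀, hz⟩ = t • (φ x₀) := LinearPMap.mkSpanSingleton'_apply _ _ _ t _
    rw [happ]
    show t • (φ x₀) ≤ φ (t • x₀)
    rcases le_or_gt 0 t with h0 | h0
    · rw [hφ.2 t h0]; simp [smul_eq_mul]
    · have h1 : t • x₀ = (-t) • (-x₀) := by simp
      rw [h1, hφ.2 (-t) (by linarith)]
      have : -φ x₀ ≤ φ (-x₀) := by linarith
      have := mul_le_mul_of_nonneg_left this (by linarith : (0:ℝ) ≤ -t)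
      simp only [smul_eq_mul]
      nlinarith
  obtain ⟨g, hgf, hgle⟩ := exists_extension_of_le_sublinear f φ
    (fun c hc x => hφ.2 c hc.le x) hφ.1 hf
  refine ⟨(WithLp.equiv 2 (Fin n → ℝ)).symm (fun i => g (EuclideanSpace.single i 1)), ?_, ?_⟩
  · intro x
    have := hgle x
    rw [linearmap_eq_dot g x] at this
    refine le_trans (le_of_eq ?_) this
    apply Finset.sum_congr rfl
    intro i _
    rw [WithLp.equiv_symm_apply, PiLp.toLp_apply, mul_comm]
  · have hx₀mem : x₀ ∈ f.domain := by
      rw [hfdef, LinearPMap.domain_mkSpanSingleton]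
      exact Submodule.mem_span_singleton_self x₀
    have := hgf ⟨x₀, hx₀mem⟩
    have happ : f ⟨x₀, hx₀mem⟩ = φ x₀ := by
      exact LinearPMap.mkSpanSingleton_apply ℝ ℝ hx (φ x₀)
    rw [happ] at this
    rw [← this, linearmap_eq_dot g x₀]
    apply Finset.sum_congr rfl
    intro i _
    rw [WithLp.equiv_symm_apply, PiLp.toLp_apply, mul_comm]

lemma exists_mem_subdiff_dot_eq {φ : EuclideanSpace ℝ (Fin n) → ℝ} (hφ : Sublinear φ)
    (x₀ : EuclideanSpace ℝ (Fin n)) :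
    ∃ a ∈ subdiff φ, ∑ i, a i * x₀ i = φ x₀ := by
  rcases eq_or_ne x₀ 0 with rfl | hx
  · rcases subsingleton_or_nontrivial (EuclideanSpace ℝ (Fin n)) with hss | hnt
    · refine ⟨0, fun x => ?_, ?_⟩
      · have hx0 : x = 0 := Subsingleton.elim _ _
        subst hx0
        simp [sublinear_zero hφ]
      · simp [sublinear_zero hφ]
    · obtain ⟨y, hy⟩ := exists_ne (0 : EuclideanSpace ℝ (Fin n))
      obtain ⟨a, ha, -⟩ := exists_mem_subdiff_dot_eq_aux hφ y hy
      refine ⟨a, ha, ?_⟩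
      simp [sublinear_zero hφ]
  · exact exists_mem_subdiff_dot_eq_aux hφ x₀ hx

lemma subdiff_nonempty {φ : EuclideanSpace ℝ (Fin n) → ℝ} (hφ : Sublinear φ) :
    (subdiff φ).Nonempty := by
  obtain ⟨a, ha, -⟩ := exists_mem_subdiff_dot_eq hφ 0
  exact ⟨a, ha⟩




lemma dot_single (a : EuclideanSpace ℝ (Fin n)) (i : Fin n) :
    ∑ j, a j * (EuclideanSpace.single i (1:ℝ)) j = a i := by
  rw [Finset.sum_eq_single i]
  · simp [EuclideanSpace.single_apply]
  · intro j _ hj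
    simp [EuclideanSpace.single_apply]
    intro hji; exact absurd hji hj
  · simp

lemma subdiff_convex (φ : EuclideanSpace ℝ (Fin n) → ℝ) : Convex ℝ (subdiff φ) := by
  intro a ha b hb θ μ hθ hμ hsum
  intro x
  have h1 : ∑ i, (θ • a + μ • b) i * x i
      = θ * (∑ i, a i * x i) + μ * (∑ i, b i * x i) := by
    rw [Finset.mul_sum, Finset.mul_sum, ← Finset.sum_add_distrib]
    apply Finset.sum_congr rfl
    intro i _
    simp [PiLp.add_apply, PiLp.smul_apply, smul_eq_mul]
    ring
  rw [h1]
  calc θ * (∑ i, a i * x i) + μ * (∑ i, b i * x i)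
      ≤ θ * φ x + μ * φ x :=
        add_le_add (mul_le_mul_of_nonneg_left (ha x) hθ) (mul_le_mul_of_nonneg_left (hb x) hμ)
    _ = φ x := by rw [← add_mul, hsum, one_mul]

lemma subdiff_isClosed (φ : EuclideanSpace ℝ (Fin n) → ℝ) : IsClosed (subdiff φ) := by
  have : subdiff φ = ⋂ x : EuclideanSpace ℝ (Fin n), {a | ∑ i, a i * x i ≤ φ x} := by
    ext a; simp [subdiff, Set.mem_iInter]
  rw [this]
  apply isClosed_iInter
  intro x
  apply isClosed_le _ continuous_const
  apply continuous_finset_sum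
  intro i _
  exact ((EuclideanSpace.proj (𝕜 := ℝ) i).continuous).mul continuous_const

lemma subdiff_isCompact {φ : EuclideanSpace ℝ (Fin n) → ℝ} (hφ : Sublinear φ) :
    IsCompact (subdiff φ) := by
  apply Metric.isCompact_of_isClosed_isBounded (subdiff_isClosed φ)
  rw [isBounded_iff_forall_norm_le]
  refine ⟨Real.sqrt (∑ i : Fin n,
    (|φ (EuclideanSpace.single i 1)| + |φ (-EuclideanSpace.single i 1)|)^2), fun a ha => ?_⟩
  rw [EuclideanSpace.norm_eq]
  apply Real.sqrt_le_sqrt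
  apply Finset.sum_le_sum
  intro i _
  have h1 : a i ≤ φ (EuclideanSpace.single i 1) := by
    have := ha (EuclideanSpace.single i 1)
    rwa [dot_single] at this
  have h2 : -a i ≤ φ (-EuclideanSpace.single i 1) := by
    have := ha (-EuclideanSpace.single i 1)
    rw [Finset.sum_eq_single i] at this
    · simpa [EuclideanSpace.single_apply, PiLp.neg_apply] using this
    · intro j _ hj
      simp [EuclideanSpace.single_apply, PiLp.neg_apply]
      intro hji; exact absurd hji hj
    · simp
  have habs : |a i| ≤ |φ (EuclideanSpace.single i 1)| + |φ (-EuclideanSpace.single i 1)| := by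
    rw [abs_le]
    constructor
    · have := le_abs_self (φ (-EuclideanSpace.single i 1))
      nlinarith [abs_nonneg (φ (EuclideanSpace.single i 1))]
    · have := le_abs_self (φ (EuclideanSpace.single i 1))
      nlinarith [abs_nonneg (φ (-EuclideanSpace.single i 1))]
  calc ‖a i‖^2 = |a i|^2 := by rw [Real.norm_eq_abs]
    _ ≤ (|φ (EuclideanSpace.single i 1)| + |φ (-EuclideanSpace.single i 1)|)^2 := by
        have h0 : (0:ℝ) ≤ |a i| := abs_nonneg _
        have := sq_abs (a i)
        nlinarith
    _ = _ := rfl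

lemma sublinear_add_norm {ξ : EuclideanSpace ℝ (Fin n) → ℝ} (hξ : Sublinear ξ) {ε : ℝ}
    (hε : 0 ≤ ε) : Sublinear (fun x => ξ x + ε * ‖x‖) := by
  constructor
  · intro x y
    have := hξ.1 x y
    have hn := norm_add_le x y
    have := mul_le_mul_of_nonneg_left hn hε
    dsimp only
    linarith
  · intro c hc x
    dsimp only
    rw [hξ.2 c hc x, norm_smul]
    simp [Real.norm_eq_abs, abs_of_nonneg hc]
    ring


end A


section DL

lemma inf'_sup'_le {D : Type*} [DistribLattice D] {ι α : Type*} [DecidableEq ι]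
    (F : ι → Finset α) (hF : ∀ j, (F j).Nonempty) (g : ι → α → D) (T : D) :
    ∀ (J : Finset ι) (hJ : J.Nonempty) (X : D),
      (∀ c : ι → α, (∀ j ∈ J, c j ∈ F j) → X ⊓ J.inf' hJ (fun j => g j (c j)) ≤ T) →
      X ⊓ J.inf' hJ (fun j => (F j).sup' (hF j) (g j)) ≤ T := by
  intro J hJ
  induction hJ using Finset.Nonempty.cons_induction with
  | singleton a =>
    intro X hyp
    rw [Finset.inf'_singleton, Finset.sup'_inf_distrib_left]
    rw [Finset.sup'_le_iff]
    intro b hb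
    have := hyp (fun _ => b) (by intro j hj; rw [Finset.mem_singleton] at hj; subst hj; exact hb)
    simpa [Finset.inf'_singleton] using this
  | cons a s ha hs ih =>
    intro X hyp
    rw [Finset.inf'_cons hs]
    have hrw : X ⊓ ((F a).sup' (hF a) (g a) ⊓ s.inf' hs (fun j => (F j).sup' (hF j) (g j)))
        = (X ⊓ s.inf' hs (fun j => (F j).sup' (hF j) (g j))) ⊓ (F a).sup' (hF a) (g a) := by
      rw [inf_comm ((F a).sup' (hF a) (g a)), ← inf_assoc]
    rw [hrw, Finset.sup'_inf_distrib_left, Finset.sup'_le_iff]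
    intro b hb
    have hres : (X ⊓ g a b) ⊓ s.inf' hs (fun j => (F j).sup' (hF j) (g j)) ≤ T := by
      apply ih (X ⊓ g a b)
      intro c hc
      have hyp' := hyp (Function.update c a b) ?_
      · rw [Finset.inf'_cons hs] at hyp'
        have heq : s.inf' hs (fun j => g j (Function.update c a b j))
            = s.inf' hs (fun j => g j (c j)) := by
          apply Finset.inf'_congr hs rfl
          intro j hj
          have hja : j ≠ a := by rintro rfl; exact ha hj
          rw [Function.update_of_ne hja]
        rw [Function.update_self, heq] at hyp'
        calc X ⊓ g a b ⊓ s.inf' hs (fun j => g j (c j))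
            = X ⊓ (g a b ⊓ s.inf' hs (fun j => g j (c j))) := by rw [inf_assoc]
          _ ≤ T := hyp'
      · intro j hj
        rcases Finset.mem_cons.1 hj with rfl | hjs
        · rw [Function.update_self]; exact hb
        · have hja : j ≠ a := by rintro rfl; exact ha hjs
          rw [Function.update_of_ne hja]
          exact hc j hjs
    calc X ⊓ s.inf' hs (fun j => (F j).sup' (hF j) (g j)) ⊓ g a b
        = (X ⊓ g a b) ⊓ s.inf' hs (fun j => (F j).sup' (hF j) (g j)) := inf_right_comm _ _ _
      _ ≤ T := hres

end DL
section VL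
variable {n : ℕ} {E : Type*} [Lattice E] [AddCommGroup E] [Module ℝ E]
  [CovariantClass E E (· + ·) (· ≤ ·)] [PosSMulMono ℝ E]




lemma smul_le_abs_smul_abs (c : ℝ) (x : E) : c • x ≤ |c| • |x| := by
  rcases le_or_gt 0 c with hc | hc
  · rw [abs_of_nonneg hc]; exact smul_le_smul_of_nonneg_left (le_abs_self x) hc
  · rw [abs_of_neg hc]
    have h : c • x = (-c) • (-x) := by rw [neg_smul, smul_neg, neg_neg]
    rw [h]
    exact smul_le_smul_of_nonneg_left (neg_le_abs x) (by linarith)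


lemma sum_le_sum_E {α : Type*} {s : Finset α} {f g : α → E} (h : ∀ i ∈ s, f i ≤ g i) :
    ∑ i ∈ s, f i ≤ ∑ i ∈ s, g i := by
  classical
  induction s using Finset.cons_induction with
  | empty => simp
  | cons a s ha ih =>
    rw [Finset.sum_cons, Finset.sum_cons]
    have h1 := h a (Finset.mem_cons_self a s)
    have h2 : ∑ i ∈ s, f i ≤ ∑ i ∈ s, g i := ih fun i hi => h i (Finset.mem_cons_of_mem hi)
    calc f a + ∑ i ∈ s, f i ≤ f a + ∑ i ∈ s, g i := add_le_add_right h2 _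
      _ ≤ g a + ∑ i ∈ s, g i := add_le_add_left h1 _

lemma sum_smul_le_eps (f : Fin n → E) {c : EuclideanSpace ℝ (Fin n)} {ε : ℝ}
    (hc : ∀ i, |c i| ≤ ε) :
    ∑ i, c i • f i ≤ ε • ∑ i, |f i| := by
  rw [Finset.smul_sum]
  apply sum_le_sum_E
  intro i _
  calc c i • f i ≤ |c i| • |f i| := smul_le_abs_smul_abs _ _
    _ ≤ ε • |f i| := by
      have h1 : (0:E) ≤ |f i| := abs_nonneg _
      have h2 : (0:E) ≤ (ε - |c i|) • |f i| := smul_nonneg (by linarith [hc i]) h1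
      rw [sub_smul] at h2
      have := sub_nonneg.1 h2
      exact this

lemma arch_le (hArch : ∀ x y : E, 0 ≤ x → 0 ≤ y → (∀ k : ℕ, k • x ≤ y) → x = 0)
    {x y w : E} (hw : 0 ≤ w) (h : ∀ ε : ℝ, 0 < ε → x ≤ y + ε • w) : x ≤ y := by
  have key : ∀ k : ℕ, k • ((x - y) ⊔ 0) ≤ w := by
    intro k
    rcases Nat.eq_zero_or_pos k with rfl | hk
    · simpa using hw
    · have hkpos : (0:ℝ) < k := by exact_mod_cast hk
      have h1 := h (1/k) (by positivity)
      have h2 : x - y ≤ (1/k : ℝ) • w := by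
        rw [sub_le_iff_le_add']; exact h1
      have h3 : (x - y) ⊔ 0 ≤ (1/k : ℝ) • w :=
        sup_le h2 (smul_nonneg (by positivity) hw)
      have h4 := smul_le_smul_of_nonneg_left h3 (le_of_lt (by exact_mod_cast hkpos : (0:ℝ) < (k:ℝ)))
      rw [smul_smul, mul_one_div_cancel (ne_of_gt hkpos), one_smul] at h4
      rwa [Nat.cast_smul_eq_nsmul] at h4
  have h0 : (x - y) ⊔ 0 = 0 := hArch _ w le_sup_right hw key
  have hxy : x - y ≤ 0 := le_sup_left.trans (le_of_eq h0)
  exact sub_nonpos.1 hxy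

lemma piLp_sum_apply {α : Type*} (s : Finset α) (g : α → EuclideanSpace ℝ (Fin n)) (i : Fin n) :
    (∑ y ∈ s, g y) i = ∑ y ∈ s, g y i := by
  induction s using Finset.cons_induction with
  | empty => simp [PiLp.zero_apply]
  | cons a s ha ih => rw [Finset.sum_cons, Finset.sum_cons, PiLp.add_apply, ih]

lemma G_sum (f : Fin n → E) {α : Type*} (s : Finset α) (w : α → ℝ)
    (z : α → EuclideanSpace ℝ (Fin n)) :
    ∑ i, (∑ y ∈ s, w y • z y) i • f i = ∑ y ∈ s, w y • ∑ i, (z y) i • f i := by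
  have h1 : ∀ i : Fin n, (∑ y ∈ s, w y • z y) i = ∑ y ∈ s, w y * (z y) i := by
    intro i
    rw [piLp_sum_apply]
    apply Finset.sum_congr rfl
    intro y _
    rw [PiLp.smul_apply, smul_eq_mul]
  calc ∑ i, (∑ y ∈ s, w y • z y) i • f i
      = ∑ i, ∑ y ∈ s, (w y * (z y) i) • f i := by
        apply Finset.sum_congr rfl
        intro i _
        rw [h1 i, Finset.sum_smul]
    _ = ∑ y ∈ s, ∑ i, (w y * (z y) i) • f i := Finset.sum_comm
    _ = ∑ y ∈ s, w y • ∑ i, (z y) i • f i := by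
        apply Finset.sum_congr rfl
        intro y _
        rw [Finset.smul_sum]
        apply Finset.sum_congr rfl
        intro i _
        rw [smul_smul]

lemma le_convex_combo {α : Type*} (s : Finset α) (w : α → ℝ) (hw : ∀ y ∈ s, 0 ≤ w y)
    (hsum : ∑ y ∈ s, w y = 1) (v : α → E) (m : E) (hm : ∀ y ∈ s, m ≤ v y) :
    m ≤ ∑ y ∈ s, w y • v y := by
  have h1 : ∑ y ∈ s, w y • m ≤ ∑ y ∈ s, w y • v y :=
    sum_le_sum_E fun y hy => smul_le_smul_of_nonneg_left (hm y hy) (hw y hy)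
  rwa [← Finset.sum_smul, hsum, one_smul] at h1

end VL


lemma near_subdiff {n : ℕ} {ξ : EuclideanSpace ℝ (Fin n) → ℝ} (hξ : Sublinear ξ) {ε : ℝ}
    (hε : 0 < ε) {b : EuclideanSpace ℝ (Fin n)}
    (hb : b ∈ subdiff (fun x => ξ x + ε * ‖x‖)) :
    ∃ b' ∈ subdiff ξ, ‖b - b'‖ ≤ ε := by
  by_contra hcon
  push_neg at hcon
  have hdis : Disjoint (subdiff ξ) (Metric.closedBall b ε) := by
    rw [Set.disjoint_left]
    intro y hy hyb
    have h1 : dist y b ≤ ε := hyb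
    have h2 := hcon y hy
    rw [dist_eq_norm, ← norm_sub_rev] at h1
    linarith
  obtain ⟨g, u', v', hg1, huv, hg2⟩ := geometric_hahn_banach_compact_closed
    (subdiff_convex ξ) (subdiff_isCompact hξ) (convex_closedBall b ε)
    Metric.isClosed_closedBall hdis
  set xf : EuclideanSpace ℝ (Fin n) :=
    (WithLp.equiv 2 (Fin n → ℝ)).symm (fun i => g (EuclideanSpace.single i 1)) with hxf
  have hgy : ∀ y : EuclideanSpace ℝ (Fin n), g y = ∑ i, y i * xf i := by
    intro y
    have h := linearmap_eq_dot (g : EuclideanSpace ℝ (Fin n) →ₗ[ℝ] ℝ) y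
    simp only [ContinuousLinearMap.coe_coe] at h
    rw [h]
    apply Finset.sum_congr rfl
    intro i _
    rw [hxf, WithLp.equiv_symm_apply, PiLp.toLp_apply]
  have hgxf : g xf = ‖xf‖^2 := by
    rw [hgy xf, EuclideanSpace.norm_eq, Real.sq_sqrt (Finset.sum_nonneg fun i _ => sq_nonneg _)]
    apply Finset.sum_congr rfl
    intro i _
    rw [Real.norm_eq_abs, sq_abs, sq]
  set d : EuclideanSpace ℝ (Fin n) := b - (ε/‖xf‖) • xf with hd
  have hdball : d ∈ Metric.closedBall b ε := by
    rw [Metric.mem_closedBall, dist_eq_norm, hd, sub_sub_cancel_left, norm_neg, norm_smul,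
      Real.norm_eq_abs, abs_of_nonneg (div_nonneg hε.le (norm_nonneg _))]
    rcases eq_or_ne ‖xf‖ 0 with h | h
    · rw [h]; simp [hε.le]
    · rw [div_mul_cancel₀ _ h]
  have h2 := hg2 d hdball
  have hgd : g d = g b - (ε/‖xf‖) * g xf := by
    rw [hd, map_sub, map_smul]; rfl
  have hgb : g b ≤ ξ xf + ε * ‖xf‖ := by
    have := hb xf
    rw [hgy b]
    exact this
  have hxfc : (ε/‖xf‖) * ‖xf‖^2 = ε * ‖xf‖ := by
    rcases eq_or_ne ‖xf‖ 0 with h | h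
    · rw [h]; ring
    · field_simp
  obtain ⟨a₀, ha₀, ha₀eq⟩ := exists_mem_subdiff_dot_eq hξ xf
  have h3 : ξ xf < u' := by
    rw [← ha₀eq, ← hgy a₀]
    exact hg1 a₀ ha₀
  rw [hgd, hgxf, hxfc] at h2
  linarith




lemma core {n : ℕ} {E : Type*} [Lattice E] [AddCommGroup E] [Module ℝ E]
    [CovariantClass E E (· + ·) (· ≤ ·)] [PosSMulMono ℝ E]
    (hArch : ∀ x y : E, 0 ≤ x → 0 ≤ y → (∀ k : ℕ, k • x ≤ y) → x = 0)
    (f : Fin n → E)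
    (P : Set (EuclideanSpace ℝ (Fin n) → ℝ)) (hP : ∀ p ∈ P, Sublinear p)
    (ξ : EuclideanSpace ℝ (Fin n) → ℝ) (hξ : Sublinear ξ) (S : E)
    (hS : IsLUB {x : E | ∃ a ∈ subdiff ξ, x = ∑ i, a i • f i} S)
    (happrox : ∀ x, ∀ ε : ℝ, 0 < ε → ∃ p ∈ P, p x < ξ x + ε)
    (hsP : ∀ p ∈ P, ∃ s, IsLUB {x : E | ∃ a ∈ subdiff p, x = ∑ i, a i • f i} s)
    (v : E)
    (hv : ∀ s : E, (∃ p ∈ P, IsLUB {x : E | ∃ a ∈ subdiff p, x = ∑ i, a i • f i} s) → v ≤ s) :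
    v ≤ S := by
  classical
  letI : DistribLattice E := AddCommGroup.toDistribLattice E
  set G : EuclideanSpace ℝ (Fin n) → E := fun a => ∑ i, a i • f i with hGdef
  set w : E := ∑ i, |f i| with hwdef
  have hw : (0:E) ≤ w := by
    rw [hwdef]
    calc (0:E) = ∑ _i : Fin n, (0:E) := by simp
      _ ≤ ∑ i, |f i| := sum_le_sum_E fun i _ => abs_nonneg (f i)
  have hGnear : ∀ a b : EuclideanSpace ℝ (Fin n), ∀ ε : ℝ, ‖a - b‖ ≤ ε →
      G a ≤ G b + ε • w := by
    intro a b ε hab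
    have h1 : G a - G b = ∑ i, (a - b) i • f i := by
      rw [hGdef]
      dsimp only
      rw [← Finset.sum_sub_distrib]
      apply Finset.sum_congr rfl
      intro i _
      rw [PiLp.sub_apply, sub_smul]
    have h2 : G a - G b ≤ ε • w := by
      rw [h1, hwdef]
      apply sum_smul_le_eps
      intro i
      exact (abs_coord_le (a - b) i).trans hab
    have := add_le_add_right h2 (G b)
    calc G a = G b + (G a - G b) := by abel
      _ ≤ G b + ε • w := this
  apply arch_le hArch hw
  intro ε' hε'
  set ε : ℝ := ε'/2 with hεdef
  have hε : 0 < ε := by positivity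
  -- finite cover of the unit ball
  obtain ⟨J, pm, hJne, hpmP, hcov⟩ : ∃ (J : Finset (EuclideanSpace ℝ (Fin n)))
      (pm : EuclideanSpace ℝ (Fin n) → (EuclideanSpace ℝ (Fin n) → ℝ)), J.Nonempty ∧
      (∀ j ∈ J, pm j ∈ P) ∧
      (∀ x, ∃ j ∈ J, pm j x ≤ ξ x + ε * ‖x‖) := by
    have hchoice : ∀ z : EuclideanSpace ℝ (Fin n), ∃ p, p ∈ P ∧ p z < ξ z + ε := by
      intro z
      obtain ⟨p, hp, hlt⟩ := happrox z ε hε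
      exact ⟨p, hp, hlt⟩
    choose pm hpmP' hpm using hchoice
    set U : EuclideanSpace ℝ (Fin n) → Set (EuclideanSpace ℝ (Fin n)) :=
      fun z => {y | pm z y < ξ y + ε} with hU
    have hUopen : ∀ z, IsOpen (U z) := by
      intro z
      exact isOpen_lt (sublinear_continuous (hP _ (hpmP' z)))
        ((sublinear_continuous hξ).add continuous_const)
    have hcomp := isCompact_closedBall (0 : EuclideanSpace ℝ (Fin n)) 1
    have hsub : Metric.closedBall (0 : EuclideanSpace ℝ (Fin n)) 1 ⊆ ⋃ z, U z := by
      intro y _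
      exact Set.mem_iUnion.2 ⟨y, hpm y⟩
    obtain ⟨J, hJ⟩ := hcomp.elim_finite_subcover U hUopen hsub
    have h0mem : (0 : EuclideanSpace ℝ (Fin n)) ∈ Metric.closedBall (0:EuclideanSpace ℝ (Fin n)) 1 :=
      Metric.mem_closedBall_self (by norm_num)
    obtain ⟨j₀, hj₀J, _⟩ := Set.mem_iUnion₂.1 (hJ h0mem)
    refine ⟨J, pm, ⟨j₀, hj₀J⟩, fun j _ => hpmP' j, ?_⟩
    intro x
    rcases eq_or_ne x 0 with rfl | hx
    · refine ⟨j₀, hj₀J, ?_⟩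
      rw [sublinear_zero (hP _ (hpmP' j₀)), sublinear_zero hξ]
      simp
    · have hxn : (0:ℝ) < ‖x‖ := norm_pos_iff.2 hx
      set y : EuclideanSpace ℝ (Fin n) := ‖x‖⁻¹ • x with hy
      have hyball : y ∈ Metric.closedBall (0 : EuclideanSpace ℝ (Fin n)) 1 := by
        rw [Metric.mem_closedBall, dist_zero_right, hy, norm_smul, Real.norm_eq_abs,
          abs_of_nonneg (inv_nonneg.2 hxn.le), inv_mul_cancel₀ (ne_of_gt hxn)]
      obtain ⟨j, hjJ, hjy⟩ := Set.mem_iUnion₂.1 (hJ hyball)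
      have hjy' : pm j y < ξ y + ε := hjy
      refine ⟨j, hjJ, ?_⟩
      have hxy : x = ‖x‖ • y := by
        rw [hy, smul_smul, mul_inv_cancel₀ (ne_of_gt hxn), one_smul]
      have h1 : pm j x = ‖x‖ * pm j y := by
        nth_rewrite 1 [hxy]
        exact (hP _ (hpmP' j)).2 _ (norm_nonneg x) _
      have h2 : ξ x = ‖x‖ * ξ y := by
        nth_rewrite 1 [hxy]
        exact hξ.2 _ (norm_nonneg x) _
      rw [h1, h2]
      have := mul_le_mul_of_nonneg_left hjy'.le (norm_nonneg x)
      calc ‖x‖ * pm j y ≤ ‖x‖ * (ξ y + ε) := this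
        _ = ‖x‖ * ξ y + ε * ‖x‖ := by ring
  -- finite ε-nets of the subdifferentials
  have hnet : ∀ p : EuclideanSpace ℝ (Fin n) → ℝ, Sublinear p →
      ∃ Fp : Finset (EuclideanSpace ℝ (Fin n)), Fp.Nonempty ∧
        (↑Fp : Set (EuclideanSpace ℝ (Fin n))) ⊆ subdiff p ∧
        ∀ a ∈ subdiff p, ∃ b ∈ Fp, ‖a - b‖ ≤ ε := by
    intro p hp
    have hcomp := subdiff_isCompact hp
    have hsub : subdiff p ⊆ ⋃ a ∈ subdiff p, Metric.ball a ε := by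
      intro a ha
      exact Set.mem_iUnion₂.2 ⟨a, ha, Metric.mem_ball_self hε⟩
    obtain ⟨b', hb'sub, hb'fin, hb'cov⟩ := hcomp.elim_finite_subcover_image
      (fun a _ => Metric.isOpen_ball) hsub
    obtain ⟨a₀, ha₀⟩ := subdiff_nonempty hp
    obtain ⟨c₀, hc₀, _⟩ := Set.mem_iUnion₂.1 (hb'cov ha₀)
    refine ⟨hb'fin.toFinset, ⟨c₀, hb'fin.mem_toFinset.2 hc₀⟩, ?_, ?_⟩
    · intro b hb
      rw [Finset.mem_coe, Set.Finite.mem_toFinset] at hb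
      exact hb'sub hb
    · intro a ha
      obtain ⟨b, hbt, hab⟩ := Set.mem_iUnion₂.1 (hb'cov ha)
      refine ⟨b, hb'fin.mem_toFinset.2 hbt, ?_⟩
      have h1 : dist a b < ε := hab
      rw [dist_eq_norm] at h1
      exact h1.le
  set Fnet : EuclideanSpace ℝ (Fin n) → Finset (EuclideanSpace ℝ (Fin n)) :=
    fun j => if hj : j ∈ J then (hnet (pm j) (hP _ (hpmP j hj))).choose else {0} with hFdef
  have hFne : ∀ j, (Fnet j).Nonempty := by
    intro j
    simp only [hFdef]
    by_cases hj : j ∈ J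
    · rw [dif_pos hj]
      exact (hnet (pm j) (hP _ (hpmP j hj))).choose_spec.1
    · rw [dif_neg hj]
      exact ⟨0, Finset.mem_singleton_self 0⟩
  have hFsub : ∀ j (hj : j ∈ J),
      (↑(Fnet j) : Set (EuclideanSpace ℝ (Fin n))) ⊆ subdiff (pm j) := by
    intro j hj
    simp only [hFdef]
    rw [dif_pos hj]
    exact (hnet (pm j) (hP _ (hpmP j hj))).choose_spec.2.1
  have hFnear : ∀ j (hj : j ∈ J), ∀ a ∈ subdiff (pm j), ∃ b ∈ Fnet j, ‖a - b‖ ≤ ε := by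
    intro j hj
    simp only [hFdef]
    rw [dif_pos hj]
    exact (hnet (pm j) (hP _ (hpmP j hj))).choose_spec.2.2
  -- the suprema s_j
  set sfun : EuclideanSpace ℝ (Fin n) → E :=
    fun j => if hj : j ∈ J then (hsP (pm j) (hpmP j hj)).choose else 0 with hsdef
  have hsfun : ∀ j (hj : j ∈ J),
      IsLUB {x : E | ∃ a ∈ subdiff (pm j), x = ∑ i, a i • f i} (sfun j) := by
    intro j hj
    simp only [hsdef]
    rw [dif_pos hj]
    exact (hsP (pm j) (hpmP j hj)).choose_spec
  -- v - ε • w is below each finite sup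
  have hlow : ∀ j ∈ J, v - ε • w ≤ (Fnet j).sup' (hFne j) G := by
    intro j hj
    have hvs : v ≤ sfun j := hv (sfun j) ⟨pm j, hpmP j hj, hsfun j hj⟩
    have hstep : sfun j ≤ (Fnet j).sup' (hFne j) G + ε • w := by
      apply (hsfun j hj).2
      intro x hx
      obtain ⟨a, ha, rfl⟩ := hx
      obtain ⟨b, hbF, hab⟩ := hFnear j hj a ha
      have h1 : G b ≤ (Fnet j).sup' (hFne j) G := Finset.le_sup' G hbF
      calc (∑ i, a i • f i) = G a := rfl
        _ ≤ G b + ε • w := hGnear a b ε hab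
        _ ≤ (Fnet j).sup' (hFne j) G + ε • w := add_le_add_left h1 _
    rw [sub_le_iff_le_add]
    exact hvs.trans hstep
  -- main distributivity estimate
  have hmain : J.inf' hJne (fun j => (Fnet j).sup' (hFne j) G) ≤ S + ε • w := by
    have hkey := inf'_sup'_le (D := E) Fnet hFne (fun _ a => G a) (S + ε • w) J hJne
      (J.inf' hJne (fun j => (Fnet j).sup' (hFne j) G)) ?_
    · rw [inf_idem] at hkey
      exact hkey
    intro c hc
    refine inf_le_right.trans ?_
    -- atomic step
    set C := J.image c with hC
    set ψ : EuclideanSpace ℝ (Fin n) → ℝ := fun x => ξ x + ε * ‖x‖ with hψ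
    have hψsub : Sublinear ψ := sublinear_add_norm hξ hε.le
    have hnd : ¬ Disjoint (subdiff ψ) (convexHull ℝ (↑C : Set (EuclideanSpace ℝ (Fin n)))) := by
      intro hdis
      obtain ⟨g, u', v', hg1, huv, hg2⟩ := geometric_hahn_banach_compact_closed
        (subdiff_convex ψ) (subdiff_isCompact hψsub)
        (convex_convexHull ℝ _) (C.finite_toSet.isClosed_convexHull (𝕜 := ℝ)) hdis
      set xf : EuclideanSpace ℝ (Fin n) :=
        (WithLp.equiv 2 (Fin n → ℝ)).symm (fun i => g (EuclideanSpace.single i 1)) with hxf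
      have hgy : ∀ y : EuclideanSpace ℝ (Fin n), g y = ∑ i, y i * xf i := by
        intro y
        have h := linearmap_eq_dot (g : EuclideanSpace ℝ (Fin n) →ₗ[ℝ] ℝ) y
        simp only [ContinuousLinearMap.coe_coe] at h
        rw [h]
        apply Finset.sum_congr rfl
        intro i _
        rw [hxf, WithLp.equiv_symm_apply, PiLp.toLp_apply]
      obtain ⟨a₀, ha₀, ha₀eq⟩ := exists_mem_subdiff_dot_eq hψsub xf
      have h3 : ψ xf < u' := by
        rw [← ha₀eq, ← hgy a₀]
        exact hg1 a₀ ha₀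
      obtain ⟨j, hjJ, hjx⟩ := hcov xf
      have h4 : v' < g (c j) := by
        apply hg2
        apply subset_convexHull ℝ _
        rw [Finset.coe_image]
        exact Set.mem_image_of_mem c (Finset.mem_coe.2 hjJ)
      have h5 : g (c j) ≤ pm j xf := by
        rw [hgy (c j)]
        exact hFsub j hjJ (hc j hjJ) xf
      have h6 : pm j xf ≤ ψ xf := hjx
      linarith
    obtain ⟨b, hbψ, hbC⟩ := Set.not_disjoint_iff.1 hnd
    rw [Finset.convexHull_eq] at hbC
    obtain ⟨wgt, hwgt0, hwgt1, hbcm⟩ := hbC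
    have hbrep : b = ∑ y ∈ C, wgt y • y := by
      rw [← hbcm, Finset.centerMass_eq_of_sum_1 _ _ hwgt1]
      rfl
    have h7 : J.inf' hJne (fun j => G (c j)) ≤ G b := by
      have hGb : G b = ∑ y ∈ C, wgt y • G y := by
        rw [hGdef]
        dsimp only
        rw [hbrep]
        exact G_sum f C wgt (fun y => y)
      rw [hGb]
      apply le_convex_combo C wgt hwgt0 hwgt1 (fun y => G y)
      intro y hy
      obtain ⟨j, hjJ, rfl⟩ := Finset.mem_image.1 hy
      exact Finset.inf'_le _ hjJ
    have h8 : G b ≤ S + ε • w := by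
      obtain ⟨b', hb', hnear⟩ := near_subdiff hξ hε hbψ
      have hGb' : G b' ≤ S := hS.1 ⟨b', hb', rfl⟩
      calc G b ≤ G b' + ε • w := hGnear b b' ε hnear
        _ ≤ S + ε • w := add_le_add_left hGb' _
    exact h7.trans h8
  -- conclusion
  have hfin1 : v - ε • w ≤ J.inf' hJne (fun j => (Fnet j).sup' (hFne j) G) :=
    Finset.le_inf' hJne _ hlow
  have hfin2 : v - ε • w ≤ S + ε • w := hfin1.trans hmain
  have hfin3 : v ≤ S + ε • w + ε • w := by
    rw [sub_le_iff_le_add] at hfin2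
    exact hfin2
  have heq : S + ε • w + ε • w = S + ε' • w := by
    rw [add_assoc, ← add_smul]
    have hee : ε + ε = ε' := by rw [hεdef]; ring
    rw [hee]
  exact heq ▸ hfin3



end Stmt16

/-- Let `E` be an Archimedean vector lattice, `f₁,…,fₙ ∈ E`,
`h : ℝⁿ → ℝ` positively homogeneous and bounded on the unit sphere, and `Φ`,
`Ξ` nonempty families of sublinear maps with
`h(x) = inf_{φ ∈ Φ} φ(x) = inf_{ξ ∈ Ξ} ξ(x)` for all `x`.  If all the suprema
`s_φ` (`φ ∈ Φ`) and `s_ξ` (`ξ ∈ Ξ`) exist in `E` and `inf_{φ ∈ Φ} s_φ` exists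
in `E`, then `inf_{ξ ∈ Ξ} s_ξ` exists in `E` and the two infima coincide. -/
theorem stmt16 {n : ℕ} {E : Type*} [Lattice E] [AddCommGroup E] [Module ℝ E]
    [CovariantClass E E (· + ·) (· ≤ ·)] [PosSMulMono ℝ E]
    (hArch : ∀ x y : E, 0 ≤ x → 0 ≤ y → (∀ k : ℕ, k • x ≤ y) → x = 0)
    (f : Fin n → E)
    (h : EuclideanSpace ℝ (Fin n) → ℝ)
    (hph : ∀ c : ℝ, 0 ≤ c → ∀ x, h (c • x) = c * h x)
    (hbdd : ∃ m M : ℝ, ∀ x : EuclideanSpace ℝ (Fin n), ‖x‖ = 1 → m ≤ h x ∧ h x ≤ M)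
    (Φ Ξ : Set (EuclideanSpace ℝ (Fin n) → ℝ)) (hΦne : Φ.Nonempty) (hΞne : Ξ.Nonempty)
    (hΦ : ∀ φ ∈ Φ, Sublinear φ) (hΞ : ∀ ξ ∈ Ξ, Sublinear ξ)
    (hrepΦ : ∀ x, IsGLB {y : ℝ | ∃ φ ∈ Φ, y = φ x} (h x))
    (hrepΞ : ∀ x, IsGLB {y : ℝ | ∃ ξ ∈ Ξ, y = ξ x} (h x))
    (hsΦ : ∀ φ ∈ Φ, ∃ s, IsLUB {x : E | ∃ a ∈ subdiff φ, x = ∑ i, a i • f i} s)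
    (hsΞ : ∀ ξ ∈ Ξ, ∃ s, IsLUB {x : E | ∃ a ∈ subdiff ξ, x = ∑ i, a i • f i} s)
    (u : E)
    (hu : IsGLB {s : E | ∃ φ ∈ Φ,
      IsLUB {x : E | ∃ a ∈ subdiff φ, x = ∑ i, a i • f i} s} u) :
    IsGLB {s : E | ∃ ξ ∈ Ξ,
      IsLUB {x : E | ∃ a ∈ subdiff ξ, x = ∑ i, a i • f i} s} u := by
  have happrox : ∀ (P Q : Set (EuclideanSpace ℝ (Fin n) → ℝ)),
      (∀ x, IsGLB {y : ℝ | ∃ φ ∈ P, y = φ x} (h x)) →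
      (∀ x, IsGLB {y : ℝ | ∃ ξ ∈ Q, y = ξ x} (h x)) →
      ∀ ξ ∈ Q, ∀ x, ∀ ε : ℝ, 0 < ε → ∃ p ∈ P, p x < ξ x + ε := by
    intro P Q hrepP hrepQ ξ hξQ x ε hε
    have hhx : h x ≤ ξ x := (hrepQ x).1 ⟨ξ, hξQ, rfl⟩
    by_contra hcon
    push_neg at hcon
    have hlb : h x + ε ∈ lowerBounds {y : ℝ | ∃ φ ∈ P, y = φ x} := by
      rintro y ⟨φ, hφP, rfl⟩
      have := hcon φ hφP
      linarith
    have := (hrepP x).2 hlb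
    linarith
  constructor
  · -- u is a lower bound
    rintro s ⟨ξ, hξΞ, hlub⟩
    exact Stmt16.core hArch f Φ hΦ ξ (hΞ ξ hξΞ) s hlub
      (happrox Φ Ξ hrepΦ hrepΞ ξ hξΞ) hsΦ u (fun s' hs' => hu.1 hs')
  · -- u is the greatest lower bound
    intro v hvlb
    apply hu.2
    rintro s ⟨φ, hφΦ, hlub⟩
    exact Stmt16.core hArch f Ξ hΞ φ (hΦ φ hφΦ) s hlub
      (happrox Ξ Φ hrepΞ hrepΦ φ hφΦ) hsΞ v (fun s' hs' => hvlb hs')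
end

section
/- Let n ∈ ℕ, let E and F be Archimedean vector lattices, let T: E → F be a vector lattice homomorphism, and let f_1,…,f_n ∈ E. Let h: ℝ^n → ℝ be a positively homogeneous function bounded on the unit sphere, and let Φ be a nonempty family of sublinear maps ℝ^n → ℝ with h(x) = inf_{φ ∈ Φ} φ(x) for all x ∈ ℝ^n. Suppose that for every φ ∈ Φ, s_φ := sup_{a ∈ ∂φ(0)} Σ_{i=1}^n a_i f_i exists in E and t_φ := sup_{a ∈ ∂φ(0)} Σ_{i=1}^n a_i T(f_i) exists in F, and that u := inf_{φ ∈ Φ} s_φ exists in E and v := inf_{φ ∈ Φ} t_φ exists in F. Then T(u) ≤ v. -/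
open scoped BigOperators

/- Auxiliary lemmas -/

lemma coord_abs_le_norm {n : ℕ} (x : EuclideanSpace ℝ (Fin n)) (i : Fin n) :
    |x i| ≤ ‖x‖ := by
  rw [EuclideanSpace.norm_eq]
  have h1 : |x i| = Real.sqrt (‖x i‖ ^ 2) := by
    rw [Real.sqrt_sq_eq_abs, abs_norm, Real.norm_eq_abs]
  rw [h1]
  apply Real.sqrt_le_sqrt
  exact Finset.single_le_sum (fun j _ => sq_nonneg ‖x j‖) (Finset.mem_univ i)

lemma smul_sup_of_pos {F : Type*} [Lattice F] [AddCommGroup F] [Module ℝ F]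
    [CovariantClass F F (· + ·) (· ≤ ·)] [PosSMulMono ℝ F]
    {c : ℝ} (hc : 0 < c) (x y : F) : c • (x ⊔ y) = c • x ⊔ c • y := by
  apply le_antisymm
  · have hx : x ≤ c⁻¹ • (c • x ⊔ c • y) := by
      calc x = c⁻¹ • (c • x) := by rw [smul_smul, inv_mul_cancel₀ hc.ne', one_smul]
      _ ≤ c⁻¹ • (c • x ⊔ c • y) :=
        smul_le_smul_of_nonneg_left le_sup_left (inv_nonneg.mpr hc.le)
    have hy : y ≤ c⁻¹ • (c • x ⊔ c • y) := by
      calc y = c⁻¹ • (c • y) := by rw [smul_smul, inv_mul_cancel₀ hc.ne', one_smul]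
      _ ≤ c⁻¹ • (c • x ⊔ c • y) :=
        smul_le_smul_of_nonneg_left le_sup_right (inv_nonneg.mpr hc.le)
    calc c • (x ⊔ y) ≤ c • (c⁻¹ • (c • x ⊔ c • y)) :=
        smul_le_smul_of_nonneg_left (sup_le hx hy) hc.le
      _ = c • x ⊔ c • y := by rw [smul_smul, mul_inv_cancel₀ hc.ne', one_smul]
  · exact sup_le (smul_le_smul_of_nonneg_left le_sup_left hc.le)
      (smul_le_smul_of_nonneg_left le_sup_right hc.le)

lemma smul_le_smul_abs {F : Type*} [Lattice F] [AddCommGroup F] [Module ℝ F]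
    [CovariantClass F F (· + ·) (· ≤ ·)] [PosSMulMono ℝ F]
    {c ε : ℝ} (h : |c| ≤ ε) (x : F) : c • x ≤ ε • |x| := by
  have h1 : c • x ≤ |c| • |x| := by
    rcases le_or_gt 0 c with hc | hc
    · rw [abs_of_nonneg hc]
      exact smul_le_smul_of_nonneg_left (le_abs_self x) hc
    · rw [abs_of_neg hc]
      have : c • x = (-c) • (-x) := by rw [neg_smul, smul_neg, neg_neg]
      rw [this]
      have hax : -x ≤ |x| := neg_le_abs x
      exact smul_le_smul_of_nonneg_left hax (by linarith)
  refine h1.trans ?_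
  have hx : (0 : F) ≤ |x| := abs_nonneg x
  have h2 : (0 : F) ≤ (ε - |c|) • |x| := smul_nonneg (by linarith) hx
  have h3 : (ε - |c|) • |x| = ε • |x| - |c| • |x| := by rw [sub_smul]
  rw [h3] at h2
  exact sub_nonneg.mp h2

lemma isLUB_empty_eq_zero {E : Type*} [Lattice E] [AddCommGroup E]
    [CovariantClass E E (· + ·) (· ≤ ·)]
    {s : E} (hs : IsLUB (∅ : Set E) s) : s = 0 := by
  have h1 : ∀ b : E, s ≤ b := fun b => hs.2 (by simp [upperBounds])
  have h2 : s ≤ s + s := h1 (s + s)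
  have h3 : (0 : E) ≤ s := by
    have := sub_nonneg.mpr h2
    simpa using this
  exact le_antisymm (h1 0) h3

lemma sum_nonneg_cov {E : Type*} [AddCommMonoid E] [PartialOrder E]
    [CovariantClass E E (· + ·) (· ≤ ·)] {ι : Type*} (s : Finset ι) (f : ι → E)
    (h : ∀ i ∈ s, 0 ≤ f i) : 0 ≤ ∑ i ∈ s, f i := by
  classical
  induction s using Finset.cons_induction with
  | empty => simp
  | cons a s ha ih =>
    rw [Finset.sum_cons]
    have h1 : 0 ≤ f a := h a (Finset.mem_cons_self a s)
    have h2 : 0 ≤ ∑ i ∈ s, f i := ih fun i hi => h i (Finset.mem_cons_of_mem hi)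
    calc (0 : E) = 0 + 0 := by rw [add_zero]
      _ ≤ f a + ∑ i ∈ s, f i := add_le_add h1 h2

lemma sum_le_sum_cov {E : Type*} [AddCommMonoid E] [PartialOrder E]
    [CovariantClass E E (· + ·) (· ≤ ·)] {ι : Type*} (s : Finset ι) (f g : ι → E)
    (h : ∀ i ∈ s, f i ≤ g i) : ∑ i ∈ s, f i ≤ ∑ i ∈ s, g i := by
  classical
  induction s using Finset.cons_induction with
  | empty => simp
  | cons a s ha ih =>
    rw [Finset.sum_cons, Finset.sum_cons]
    exact add_le_add (h a (Finset.mem_cons_self a s))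
      (ih fun i hi => h i (Finset.mem_cons_of_mem hi))

/-- Key lemma: a lattice homomorphism maps the sup over a subdifferential
below the corresponding sup of images. -/
lemma key_lemma {n : ℕ} {E F : Type*}
    [Lattice E] [AddCommGroup E] [Module ℝ E]
    [CovariantClass E E (· + ·) (· ≤ ·)] [PosSMulMono ℝ E]
    [Lattice F] [AddCommGroup F] [Module ℝ F]
    [CovariantClass F F (· + ·) (· ≤ ·)] [PosSMulMono ℝ F]
    (hArchF : ∀ x y : F, 0 ≤ x → 0 ≤ y → (∀ k : ℕ, k • x ≤ y) → x = 0)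
    (T : E →ₗ[ℝ] F) (hT : ∀ x y : E, T (x ⊔ y) = T x ⊔ T y)
    (f : Fin n → E) (φ : EuclideanSpace ℝ (Fin n) → ℝ)
    (s : E) (hs : IsLUB {x : E | ∃ a ∈ subdiff φ, x = ∑ i, a i • f i} s)
    (t : F) (ht : IsLUB {y : F | ∃ a ∈ subdiff φ, y = ∑ i, a i • T (f i)} t) :
    T s ≤ t := by
  have hmono : ∀ {x y : E}, x ≤ y → T x ≤ T y := by
    intro x y hxy
    have h1 : T (x ⊔ y) = T x ⊔ T y := hT x y
    rw [sup_eq_right.mpr hxy] at h1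
    exact h1 ▸ le_sup_left
  by_cases hne : (subdiff φ).Nonempty
  · -- the main case
    obtain ⟨a₀, ha₀⟩ := hne
    set g : E := ∑ i, |f i| with hg
    have hg0 : (0 : E) ≤ g := by
      rw [hg]
      exact sum_nonneg_cov _ _ fun i _ => abs_nonneg (f i)
    have hTg0 : (0 : F) ≤ T g := by
      have := hmono hg0
      simpa using this
    -- the subdifferential is bounded
    set C : Fin n → ℝ := fun i =>
      max (φ (EuclideanSpace.single i 1)) (φ (-EuclideanSpace.single i 1)) with hC
    have hCoord : ∀ a ∈ subdiff φ, ∀ i, |a i| ≤ C i := by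
      intro a ha i
      have h1 : ∑ j, a j * (EuclideanSpace.single i (1:ℝ)) j = a i := by
        simp [EuclideanSpace.single_apply]
      have h2 : ∑ j, a j * (-EuclideanSpace.single i (1:ℝ)) j = -a i := by
        simp [EuclideanSpace.single_apply, Finset.sum_ite_eq, mul_comm]
      have h3 : a i ≤ φ (EuclideanSpace.single i 1) := h1 ▸ ha _
      have h4 : -a i ≤ φ (-EuclideanSpace.single i 1) := h2 ▸ ha _
      rw [abs_le]
      constructor
      · linarith [le_max_right (φ (EuclideanSpace.single i (1:ℝ)))
          (φ (-EuclideanSpace.single i (1:ℝ)))]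
      · exact h3.trans (le_max_left _ _)
    set R : ℝ := Real.sqrt (∑ i, C i ^ 2) with hR
    have hsubB : subdiff φ ⊆ Metric.closedBall (0 : EuclideanSpace ℝ (Fin n)) R := by
      intro a ha
      rw [Metric.mem_closedBall, dist_zero_right, EuclideanSpace.norm_eq]
      apply Real.sqrt_le_sqrt
      apply Finset.sum_le_sum
      intro i _
      have h1 : ‖a i‖ = |a i| := Real.norm_eq_abs _
      rw [h1]
      have h2 : (0:ℝ) ≤ |a i| := abs_nonneg _
      have h3 := hCoord a ha i
      nlinarith
    have htb : TotallyBounded (subdiff φ) :=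
      (isCompact_closedBall (0 : EuclideanSpace ℝ (Fin n)) R).totallyBounded.subset hsubB
    -- Claim A : for all ε > 0, T s ≤ t + ε • T g
    have claimA : ∀ ε : ℝ, 0 < ε → T s ≤ t + ε • T g := by
      intro ε hε
      obtain ⟨N, hNsub, hNfin, hNcover⟩ :=
        totallyBounded_iff_subset.mp htb _ (Metric.dist_mem_uniformity hε)
      have hNne : (hNfin.toFinset).Nonempty := by
        obtain ⟨b, hb⟩ : ∃ b ∈ N, a₀ ∈ {x | dist x b < ε} := by
          have := hNcover ha₀
          simpa using this
        exact ⟨b, hNfin.mem_toFinset.mpr hb.1⟩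
      set w : E := hNfin.toFinset.sup' hNne (fun b => ∑ i, b i • f i) with hw
      -- s ≤ w + ε • g
      have hsw : s ≤ w + ε • g := by
        apply hs.2
        rintro x ⟨a, ha, rfl⟩
        obtain ⟨b, hbN, hab⟩ : ∃ b ∈ N, dist a b < ε := by
          have := hNcover ha
          simpa using this
        have hterm : ∀ i, a i • f i ≤ b i • f i + ε • |f i| := by
          intro i
          have h1 : |a i - b i| ≤ ε := by
            have h2 : |(a - b) i| ≤ ‖a - b‖ := coord_abs_le_norm (a - b) i
            have h3 : (a - b) i = a i - b i := rfl
            rw [h3] at h2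
            rw [dist_eq_norm] at hab
            linarith
          have h4 : (a i - b i) • f i ≤ ε • |f i| := smul_le_smul_abs h1 (f i)
          have h5 : (a i - b i) • f i = a i • f i - b i • f i := sub_smul _ _ _
          rw [h5] at h4
          exact sub_le_iff_le_add'.mp h4
        calc ∑ i, a i • f i ≤ ∑ i, (b i • f i + ε • |f i|) :=
            sum_le_sum_cov _ _ _ fun i _ => hterm i
          _ = (∑ i, b i • f i) + ε • g := by
            rw [Finset.sum_add_distrib, Finset.smul_sum]
          _ ≤ w + ε • g := by
            have : ∑ i, b i • f i ≤ w :=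
              Finset.le_sup' (fun b => ∑ i, b i • f i) (hNfin.mem_toFinset.mpr hbN)
            exact add_le_add this le_rfl
      -- apply T
      have hTw : T w ≤ t := by
        have hTsup : T w = hNfin.toFinset.sup' hNne (fun b => T (∑ i, b i • f i)) := by
          let Tsup : SupHom E F := ⟨T, hT⟩
          exact map_finset_sup' Tsup hNne _
        rw [hTsup]
        apply Finset.sup'_le
        intro b hb
        apply ht.1
        refine ⟨b, hNsub (hNfin.mem_toFinset.mp hb), ?_⟩
        rw [map_sum]
        simp [map_smul]
      calc T s ≤ T (w + ε • g) := hmono hsw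
        _ = T w + ε • T g := by rw [map_add, map_smul]
        _ ≤ t + ε • T g := add_le_add hTw le_rfl
    -- Archimedean argument
    set p : F := (T s - t) ⊔ 0 with hp
    have hp0 : (0 : F) ≤ p := le_sup_right
    have hparch : ∀ k : ℕ, k • p ≤ T g := by
      intro k
      cases k with
      | zero => simpa using hTg0
      | succ m =>
        set c : ℝ := ((m + 1 : ℕ) : ℝ) with hc
        have hcpos : (0 : ℝ) < c := by positivity
        have h1 : T s ≤ t + c⁻¹ • T g := claimA c⁻¹ (by positivity)
        have h2 : T s - t ≤ c⁻¹ • T g := by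
          rw [sub_le_iff_le_add, add_comm]
          exact h1
        have h3 : c • (T s - t) ≤ T g := by
          have := smul_le_smul_of_nonneg_left h2 hcpos.le
          rwa [smul_smul, mul_inv_cancel₀ hcpos.ne', one_smul] at this
        have h4 : c • p ≤ T g := by
          rw [hp, smul_sup_of_pos hcpos, smul_zero]
          exact sup_le h3 hTg0
        rw [← Nat.cast_smul_eq_nsmul ℝ]
        exact h4
    have hpz : p = 0 := hArchF p (T g) hp0 hTg0 hparch
    have hle : T s - t ≤ p := le_sup_left
    rw [hpz] at hle
    exact sub_nonpos.mp hle
  · -- empty subdifferential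
    rw [Set.not_nonempty_iff_eq_empty] at hne
    have hsE : {x : E | ∃ a ∈ subdiff φ, x = ∑ i, a i • f i} = ∅ := by
      simp [hne]
    have htF : {y : F | ∃ a ∈ subdiff φ, y = ∑ i, a i • T (f i)} = ∅ := by
      simp [hne]
    rw [hsE] at hs
    rw [htF] at ht
    have h1 : s = 0 := isLUB_empty_eq_zero hs
    have h2 : t = 0 := isLUB_empty_eq_zero ht
    rw [h1, h2, map_zero]

/-- Let `E`, `F` be Archimedean vector lattices, `T : E → F` a
vector lattice homomorphism, `f₁,…,fₙ ∈ E`, `h : ℝⁿ → ℝ` positively homogeneous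
and bounded on the unit sphere, and `Φ` a nonempty family of sublinear maps
with `h(x) = inf_{φ ∈ Φ} φ(x)`.  If all suprema `s_φ` exist in `E`, all suprema
`t_φ` exist in `F`, `u = inf_{φ ∈ Φ} s_φ` exists in `E` and
`v = inf_{φ ∈ Φ} t_φ` exists in `F`, then `T u ≤ v`. -/
theorem stmt17 {n : ℕ} {E F : Type*}
    [Lattice E] [AddCommGroup E] [Module ℝ E]
    [CovariantClass E E (· + ·) (· ≤ ·)] [PosSMulMono ℝ E]
    [Lattice F] [AddCommGroup F] [Module ℝ F]
    [CovariantClass F F (· + ·) (· ≤ ·)] [PosSMulMono ℝ F]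
    (hArchE : ∀ x y : E, 0 ≤ x → 0 ≤ y → (∀ k : ℕ, k • x ≤ y) → x = 0)
    (hArchF : ∀ x y : F, 0 ≤ x → 0 ≤ y → (∀ k : ℕ, k • x ≤ y) → x = 0)
    (T : E →ₗ[ℝ] F) (hT : ∀ x y : E, T (x ⊔ y) = T x ⊔ T y)
    (f : Fin n → E)
    (h : EuclideanSpace ℝ (Fin n) → ℝ)
    (hph : ∀ c : ℝ, 0 ≤ c → ∀ x, h (c • x) = c * h x)
    (hbdd : ∃ m M : ℝ, ∀ x : EuclideanSpace ℝ (Fin n), ‖x‖ = 1 → m ≤ h x ∧ h x ≤ M)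
    (Φ : Set (EuclideanSpace ℝ (Fin n) → ℝ)) (hΦne : Φ.Nonempty)
    (hΦ : ∀ φ ∈ Φ, Sublinear φ)
    (hrep : ∀ x, IsGLB {y : ℝ | ∃ φ ∈ Φ, y = φ x} (h x))
    (hsΦ : ∀ φ ∈ Φ, ∃ s, IsLUB {x : E | ∃ a ∈ subdiff φ, x = ∑ i, a i • f i} s)
    (htΦ : ∀ φ ∈ Φ, ∃ t, IsLUB {y : F | ∃ a ∈ subdiff φ, y = ∑ i, a i • T (f i)} t)
    (u : E)
    (hu : IsGLB {s : E | ∃ φ ∈ Φ,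
      IsLUB {x : E | ∃ a ∈ subdiff φ, x = ∑ i, a i • f i} s} u)
    (v : F)
    (hv : IsGLB {t : F | ∃ φ ∈ Φ,
      IsLUB {y : F | ∃ a ∈ subdiff φ, y = ∑ i, a i • T (f i)} t} v) :
    T u ≤ v := by
  have hmono : ∀ {x y : E}, x ≤ y → T x ≤ T y := by
    intro x y hxy
    have h1 : T (x ⊔ y) = T x ⊔ T y := hT x y
    rw [sup_eq_right.mpr hxy] at h1
    exact h1 ▸ le_sup_left
  apply hv.2
  rintro t ⟨φ, hφΦ, ht⟩
  obtain ⟨s, hs⟩ := hsΦ φ hφΦ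
  have hus : u ≤ s := hu.1 ⟨φ, hφΦ, hs⟩
  exact (hmono hus).trans (key_lemma hArchF T hT f φ s hs t ht)
end
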